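/- Let X and Y be nonempty sets, B_X and B_Y real normed vector spaces, and e_X : B_X → (X → ℝ) and e_Y : B_Y → (Y → ℝ) injective linear maps realizing their elements as real-valued functions. Fix points x₁, …, x_{n_x} ∈ X and y₁, …, y_{n_y} ∈ Y and responses z_{ij} ∈ ℝ for i = 1,…,n_x, j = 1,…,n_y, and let N be the set of pairs (f, g) ∈ B_X × B_Y satisfying the interpolation constraints (e_X f)(x_i)·(e_Y g)(y_j) = z_{ij} for all i, j. Suppose (f*, g*) ∈ N minimizes ‖f‖_{B_X} + ‖g‖_{B_Y} over N, the norm of B_X is Gâteaux differentiable at f* with derivative the linear functional D : B_X → ℝ (i.e. for every w ∈ B_X, the function t ↦ ‖f* + t·w‖_{B_X} is differentiable at t = 0 with derivative D(w)), and the norm of B_Y is Gâteaux differentiable at g* with derivative D' : B_Y → ℝ. Then there exist ξ₁, …, ξ_{n_x} ∈ ℝ and ζ₁, …, ζ_{n_y} ∈ ℝ such that D(w) = Σ_{i=1}^{n_x} ξ_i·(e_X w)(x_i) for all w ∈ B_X and D'(v) = Σ_{j=1}^{n_y} ζ_j·(e_Y v)(y_j) for all v ∈ B_Y. -/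

import Mathlib

/-!
Perturbing `f*` by a direction `w` on which every evaluation `f ↦ f(xᵢ)` vanishes keeps `(f*, g*)`
inside the interpolation set, so `τ ↦ ‖f* + τ w‖` is minimal at `τ = 0` and the Gâteaux derivative
vanishes on the common kernel of the evaluations. A linear functional vanishing on the common
kernel of finitely many functionals is a linear combination of them; the same holds for `g*`.
-/

theorem LinearMap.exists_eq_sum_mul_of_forall_eq_zero {𝕜 E ι : Type*} [Field 𝕜] [AddCommGroup E]
    [Module 𝕜 E] [Fintype ι] {L : ι → E →ₗ[𝕜] 𝕜} {K : E →ₗ[𝕜] 𝕜}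
    (h : ∀ w, (∀ i, L i w = 0) → K w = 0) :
    ∃ c : ι → 𝕜, ∀ w, K w = ∑ i, c i * L i w := by
  obtain ⟨c, hc⟩ := (Submodule.mem_span_range_iff_exists_fun 𝕜).1
    (mem_span_of_iInf_ker_le_ker fun w hw => h w (by simpa using hw))
  exact ⟨c, fun w => by simp [← hc]⟩

theorem IsMinOn.exists_eq_sum_mul_of_hasDerivAt {E ι : Type*} [AddCommGroup E] [Module ℝ E]
    [Fintype ι] {L : ι → E →ₗ[ℝ] ℝ} {φ : E → ℝ} {u : E}
    (hmin : IsMinOn φ {v | ∀ i, L i v = L i u} u) {D : E →ₗ[ℝ] ℝ}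
    (hD : ∀ w, HasDerivAt (fun τ : ℝ => φ (u + τ • w)) (D w) 0) :
    ∃ c : ι → ℝ, ∀ w, D w = ∑ i, c i * L i w := by
  refine LinearMap.exists_eq_sum_mul_of_forall_eq_zero fun w hw => ?_
  have hloc : IsLocalMin (fun τ : ℝ => φ (u + τ • w)) 0 :=
    Filter.Eventually.of_forall fun τ => by
      simpa using isMinOn_iff.1 hmin (u + τ • w) fun i => by simp [hw i]
  exact hloc.hasDerivAt_eq_zero (hD w)

theorem stmt_13_general {X Y : Type*}
    {BX BY : Type*} [NormedAddCommGroup BX] [NormedSpace ℝ BX]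
    [NormedAddCommGroup BY] [NormedSpace ℝ BY]
    (eX : BX →ₗ[ℝ] X → ℝ) (eY : BY →ₗ[ℝ] Y → ℝ)
    (nx ny : ℕ) (x : Fin nx → X) (y : Fin ny → Y)
    (z : Fin nx → Fin ny → ℝ)
    (fstar : BX) (gstar : BY)
    (hmem : ∀ (i : Fin nx) (j : Fin ny), eX fstar (x i) * eY gstar (y j) = z i j)
    (hmin : ∀ (f : BX) (g : BY),
      (∀ (i : Fin nx) (j : Fin ny), eX f (x i) * eY g (y j) = z i j) →
      ‖fstar‖ + ‖gstar‖ ≤ ‖f‖ + ‖g‖)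
    (D : BX →L[ℝ] ℝ) (D' : BY →L[ℝ] ℝ)
    (hD : ∀ w : BX, HasDerivAt (fun τ : ℝ => ‖fstar + τ • w‖) (D w) 0)
    (hD' : ∀ v : BY, HasDerivAt (fun τ : ℝ => ‖gstar + τ • v‖) (D' v) 0) :
    ∃ (ξ : Fin nx → ℝ) (ζ : Fin ny → ℝ),
      (∀ w : BX, D w = ∑ i, ξ i * eX w (x i)) ∧
      (∀ v : BY, D' v = ∑ j, ζ j * eY v (y j)) := by
  have hminX : IsMinOn (‖·‖) {f | ∀ i, (LinearMap.proj (x i)).comp eX f = eX fstar (x i)} fstar :=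
    isMinOn_iff.2 fun f hf => by
      linarith [hmin f gstar fun i j => by rw [← hmem i j, ← hf i]; rfl]
  have hminY : IsMinOn (‖·‖) {g | ∀ j, (LinearMap.proj (y j)).comp eY g = eY gstar (y j)} gstar :=
    isMinOn_iff.2 fun g hg => by
      linarith [hmin fstar g fun i j => by rw [← hmem i j, ← hg j]; rfl]
  obtain ⟨ξ, hξ⟩ := hminX.exists_eq_sum_mul_of_hasDerivAt (D := D.toLinearMap) hD
  obtain ⟨ζ, hζ⟩ := hminY.exists_eq_sum_mul_of_hasDerivAt (D := D'.toLinearMap) hD'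
  exact ⟨ξ, ζ, hξ, hζ⟩

theorem stmt_13 {X Y : Type*} [Nonempty X] [Nonempty Y]
    {BX BY : Type*} [NormedAddCommGroup BX] [NormedSpace ℝ BX]
    [NormedAddCommGroup BY] [NormedSpace ℝ BY]
    (eX : BX →ₗ[ℝ] X → ℝ) (eY : BY →ₗ[ℝ] Y → ℝ)
    (heX : Function.Injective eX) (heY : Function.Injective eY)
    (nx ny : ℕ) (x : Fin nx → X) (y : Fin ny → Y)
    (z : Fin nx → Fin ny → ℝ)
    (fstar : BX) (gstar : BY)
    (hmem : ∀ (i : Fin nx) (j : Fin ny), eX fstar (x i) * eY gstar (y j) = z i j)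
    (hmin : ∀ (f : BX) (g : BY),
      (∀ (i : Fin nx) (j : Fin ny), eX f (x i) * eY g (y j) = z i j) →
      ‖fstar‖ + ‖gstar‖ ≤ ‖f‖ + ‖g‖)
    (D : BX →L[ℝ] ℝ) (D' : BY →L[ℝ] ℝ)
    (hD : ∀ w : BX, HasDerivAt (fun τ : ℝ => ‖fstar + τ • w‖) (D w) 0)
    (hD' : ∀ v : BY, HasDerivAt (fun τ : ℝ => ‖gstar + τ • v‖) (D' v) 0) :
    ∃ (ξ : Fin nx → ℝ) (ζ : Fin ny → ℝ),
      (∀ w : BX, D w = ∑ i, ξ i * eX w (x i)) ∧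
      (∀ v : BY, D' v = ∑ j, ζ j * eY v (y j)) :=
  stmt_13_general eX eY nx ny x y z fstar gstar hmem hmin D D' hD hD'
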